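/- arXiv:0803.3288 — 5 statements merged into one kernel-verified Lean document; each statement's English description precedes it below -/
import Mathlib

section
/- Let I ⊂ ℝ and suppose real sequences (β_n(λ)), (v_n(λ)), (w_n(λ)) for n ≥ N satisfy: inf_{λ∈I} v_n(λ) > -1 for all n ≥ N; w_N(λ) ≥ v_N(λ) for all λ ∈ I; and for all n > N and λ ∈ I: 0 ≤ 1 + β_n(λ), v_n(λ) ≤ (1+β_n(λ))·v_{n-1}(λ)/(1+v_{n-1}(λ)) − β_n(λ), and w_n(λ) ≥ (1+β_n(λ))·w_{n-1}(λ)/(1+w_{n-1}(λ)) − β_n(λ). If (X_n(λ))_{n≥N} satisfies the Riccati recurrence X_n = (1+β_n)·X_{n-1}/(X_{n-1}+1) − β_n for n > N and X_N(λ) ∈ [v_N(λ), w_N(λ)] for all λ ∈ I, then v_n(λ) ≤ X_n(λ) ≤ w_n(λ) for all n ≥ N and all λ ∈ I. -/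
/-! For `1 + β ≥ 0` the Riccati map `x ↦ (1 + β) x / (x + 1) - β` is increasing on `(-1, ∞)`, so
each step of the recurrence preserves the ordering `v ≤ X ≤ w`; the uniform bound `v > -1` keeps
all three sequences inside that interval, where the monotonicity applies. -/

noncomputable def riccatiStep (b x : ℝ) : ℝ := (1 + b) * x / (x + 1) - b

lemma riccatiStep_monotoneOn {b : ℝ} (hb : 0 ≤ 1 + b) :
    MonotoneOn (riccatiStep b) (Set.Ioi (-1)) := by
  intro x hx y hy hxy
  have hx' : 0 < x + 1 := by linarith [Set.mem_Ioi.mp hx]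
  have hy' : 0 < y + 1 := by linarith [Set.mem_Ioi.mp hy]
  have : (1 + b) * x / (x + 1) ≤ (1 + b) * y / (y + 1) := by
    rw [div_le_div_iff₀ hx' hy']
    nlinarith
  simpa only [riccatiStep, sub_le_sub_iff_right] using this

theorem le_and_le_of_monotoneOn {α : Type*} [Preorder α] {s : Set α} (hs : IsUpperSet s)
    {N : ℕ} {f : ℕ → α → α} {v x w : ℕ → α} (hf : ∀ n > N, MonotoneOn (f n) s)
    (hvs : ∀ n ≥ N, v n ∈ s) (hv : ∀ n > N, v n ≤ f n (v (n - 1)))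
    (hx : ∀ n > N, x n = f n (x (n - 1))) (hw : ∀ n > N, f n (w (n - 1)) ≤ w n)
    (h0 : v N ≤ x N ∧ x N ≤ w N) : ∀ n ≥ N, v n ≤ x n ∧ x n ≤ w n := by
  intro n hn
  induction n, hn using Nat.le_induction with
  | base => exact h0
  | succ n hn ih =>
    obtain ⟨hvx, hxw⟩ := ih
    have hvn : v n ∈ s := hvs n hn
    have hxn : x n ∈ s := hs hvx hvn
    have hwn : w n ∈ s := hs hxw hxn
    have hN : n + 1 > N := Nat.lt_succ_of_le hn
    have hfn := hf (n + 1) hN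
    have hv' := hv (n + 1) hN
    have hx' := hx (n + 1) hN
    have hw' := hw (n + 1) hN
    simp only [Nat.add_sub_cancel] at hv' hx' hw'
    rw [hx']
    exact ⟨hv'.trans (hfn hvn hxn hvx), (hfn hxn hwn hxw).trans hw'⟩

theorem kelley_uniform_trapping_general (I : Set ℝ) (N : ℕ) (β v w X : ℕ → ℝ → ℝ)
    (hv : ∀ n ≥ N, ∃ c > (-1 : ℝ), ∀ t ∈ I, c ≤ v n t)
    (hβ : ∀ n > N, ∀ t ∈ I, 0 ≤ 1 + β n t)
    (hvrec : ∀ n > N, ∀ t ∈ I,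
      v n t ≤ (1 + β n t) * v (n - 1) t / (1 + v (n - 1) t) - β n t)
    (hwrec : ∀ n > N, ∀ t ∈ I,
      w n t ≥ (1 + β n t) * w (n - 1) t / (1 + w (n - 1) t) - β n t)
    (hX : ∀ n > N, ∀ t ∈ I,
      X n t = (1 + β n t) * X (n - 1) t / (X (n - 1) t + 1) - β n t)
    (hX0 : ∀ t ∈ I, v N t ≤ X N t ∧ X N t ≤ w N t) :
    ∀ n ≥ N, ∀ t ∈ I, v n t ≤ X n t ∧ X n t ≤ w n t := by
  intro n hn t ht
  refine le_and_le_of_monotoneOn (s := Set.Ioi (-1)) (f := fun n => riccatiStep (β n t))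
    (v := (v · t)) (x := (X · t)) (w := (w · t)) (isUpperSet_Ioi _)
    (fun n hn => riccatiStep_monotoneOn (hβ n hn t ht)) ?_ ?_ (fun n hn => hX n hn t ht)
    ?_ (hX0 t ht) n hn
  · intro n hn
    obtain ⟨c, hc, hcv⟩ := hv n hn
    exact hc.trans_le (hcv t ht)
  · intro n hn
    simpa only [riccatiStep, add_comm (1 : ℝ) (v (n - 1) t)] using hvrec n hn t ht
  · intro n hn
    simpa only [riccatiStep, add_comm (1 : ℝ) (w (n - 1) t)] using hwrec n hn t ht

/-- Uniform-in-λ Kelley majorant–minorant comparison theorem (forward trapping). -/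
theorem kelley_uniform_trapping (I : Set ℝ) (N : ℕ) (β v w X : ℕ → ℝ → ℝ)
    (hv : ∀ n ≥ N, ∃ c > (-1 : ℝ), ∀ t ∈ I, c ≤ v n t)
    (hwv : ∀ t ∈ I, v N t ≤ w N t)
    (hβ : ∀ n > N, ∀ t ∈ I, 0 ≤ 1 + β n t)
    (hvrec : ∀ n > N, ∀ t ∈ I,
      v n t ≤ (1 + β n t) * v (n - 1) t / (1 + v (n - 1) t) - β n t)
    (hwrec : ∀ n > N, ∀ t ∈ I,
      w n t ≥ (1 + β n t) * w (n - 1) t / (1 + w (n - 1) t) - β n t)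
    (hX : ∀ n > N, ∀ t ∈ I,
      X n t = (1 + β n t) * X (n - 1) t / (X (n - 1) t + 1) - β n t)
    (hX0 : ∀ t ∈ I, v N t ≤ X N t ∧ X N t ≤ w N t) :
    ∀ n ≥ N, ∀ t ∈ I, v n t ≤ X n t ∧ X n t ≤ w n t :=
  kelley_uniform_trapping_general I N β v w X hv hβ hvrec hwrec hX hX0
end

section
/- Let I ⊂ ℝ, N ∈ ℕ, and real sequences (β_n(λ)), (v_n(λ)), (w_n(λ)) satisfy: v_n(λ) ≥ w_n(λ) for all λ ∈ I and n ≥ N; sup over λ∈I and n≥N of |v_n(λ)| and of |w_n(λ)| are both strictly less than 1; and for all n > N and λ ∈ I: 0 ≤ 1+β_n(λ), v_n(λ) ≤ (1+β_n(λ))·v_{n-1}(λ)/(1+v_{n-1}(λ)) − β_n(λ), and w_n(λ) ≥ (1+β_n(λ))·w_{n-1}(λ)/(1+w_{n-1}(λ)) − β_n(λ). Then for each λ ∈ I there exists a solution (X_n(λ))_{n≥N} of the Riccati recurrence X_n = (1+β_n)·X_{n-1}/(X_{n-1}+1) − β_n (for n > N) such that w_n(λ) ≤ X_n(λ) ≤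 v_n(λ) for all n ≥ N. -/
/-!
The backward map `x ↦ (x + β_n) / (1 - x)` inverts the Riccati step and is increasing on
`x < 1` when `1 + β_n ≥ 0`. Iterating it downward from the terminal value `w_s` at index `s`
gives `Y_s`; the inequalities satisfied by `v` and `w` say precisely that a backward step keeps
the strip `w ≤ Y ≤ v`, and since `Y_{s+1}(s) ≥ w_s = Y_s(s)`, monotonicity of the backward map
makes `Y_s(n)` nondecreasing in `s`. The limit `X_n = sup_s Y_s(n)` stays in the strip, hence
below `1` where the backward map is continuous, so `X` solves the recurrence.
-/

open Filter Topology

noncomputable section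

def riccatiMap (b y : ℝ) : ℝ := (1 + b) * y / (1 + y) - b

def riccatiInv (b x : ℝ) : ℝ := (x + b) / (1 - x)

section Maps

variable {b x y : ℝ}

lemma riccatiMap_eq_div (hy : -1 < y) : riccatiMap b y = (y - b) / (1 + y) := by
  have : 1 + y ≠ 0 := by linarith
  unfold riccatiMap
  field_simp
  ring

-- Both sides reduce to `x + b ≤ y * (1 - x)`.
lemma riccatiInv_le_iff (hx : x < 1) (hy : -1 < y) :
    riccatiInv b x ≤ y ↔ x ≤ riccatiMap b y := by
  rw [riccatiInv, riccatiMap_eq_div hy, div_le_iff₀ (by linarith), le_div_iff₀ (by linarith)]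
  constructor <;> intro h <;> linarith

lemma le_riccatiInv_iff (hx : x < 1) (hy : -1 < y) :
    y ≤ riccatiInv b x ↔ riccatiMap b y ≤ x := by
  rw [riccatiInv, riccatiMap_eq_div hy, le_div_iff₀ (by linarith), div_le_iff₀ (by linarith)]
  constructor <;> intro h <;> linarith

lemma riccatiInv_eq_iff (hx : x < 1) (hy : -1 < y) :
    riccatiInv b x = y ↔ x = riccatiMap b y := by
  rw [le_antisymm_iff, le_antisymm_iff, riccatiInv_le_iff hx hy, le_riccatiInv_iff hx hy, and_comm]

lemma riccatiInv_le_riccatiInv (hb : 0 ≤ 1 + b) {x' : ℝ} (hxx' : x ≤ x') (hx' : x' < 1) :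
    riccatiInv b x ≤ riccatiInv b x' := by
  rw [riccatiInv, riccatiInv, div_le_div_iff₀ (by linarith) (by linarith)]
  nlinarith [mul_nonneg hb (sub_nonneg.2 hxx')]

lemma continuousAt_riccatiInv (hx : x < 1) : ContinuousAt (riccatiInv b) x :=
  (continuousAt_id.add continuousAt_const).div (continuousAt_const.sub continuousAt_id)
    (by linarith)

end Maps

def riccatiBackward (β w : ℕ → ℝ) (s n : ℕ) : ℝ :=
  if s ≤ n then w n else riccatiInv (β (n + 1)) (riccatiBackward β w s (n + 1))
termination_by s - n

section Backward

variable {β v w : ℕ → ℝ} {N s n : ℕ}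

lemma riccatiBackward_of_le (h : s ≤ n) : riccatiBackward β w s n = w n := by
  rw [riccatiBackward, if_pos h]

lemma riccatiBackward_of_lt (h : n < s) :
    riccatiBackward β w s n = riccatiInv (β (n + 1)) (riccatiBackward β w s (n + 1)) := by
  rw [riccatiBackward, if_neg h.not_ge]

lemma riccatiBackward_mem_Icc (hw : ∀ n ≥ N, -1 < w n) (hv : ∀ n ≥ N, v n < 1)
    (hwv : ∀ n ≥ N, w n ≤ v n)
    (hvrec : ∀ n ≥ N, v (n + 1) ≤ riccatiMap (β (n + 1)) (v n))
    (hwrec : ∀ n ≥ N, riccatiMap (β (n + 1)) (w n) ≤ w (n + 1))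
    (s : ℕ) {n : ℕ} (hn : N ≤ n) :
    riccatiBackward β w s n ∈ Set.Icc (w n) (v n) := by
  by_cases hsn : s ≤ n
  · rw [riccatiBackward_of_le hsn]
    exact ⟨le_rfl, hwv n hn⟩
  · obtain ⟨ih_lo, ih_hi⟩ :=
      riccatiBackward_mem_Icc hw hv hwv hvrec hwrec s (Nat.le_succ_of_le hn)
    have hlt : riccatiBackward β w s (n + 1) < 1 := ih_hi.trans_lt (hv _ (by omega))
    rw [riccatiBackward_of_lt (not_le.1 hsn)]
    exact ⟨(le_riccatiInv_iff hlt (hw n hn)).2 ((hwrec n hn).trans ih_lo),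
      (riccatiInv_le_iff hlt ((hw n hn).trans_le (hwv n hn))).2 (ih_hi.trans (hvrec n hn))⟩
termination_by s - n

lemma riccatiBackward_le_succ (hw : ∀ n ≥ N, -1 < w n) (hv : ∀ n ≥ N, v n < 1)
    (hwv : ∀ n ≥ N, w n ≤ v n) (hβ : ∀ n > N, 0 ≤ 1 + β n)
    (hvrec : ∀ n ≥ N, v (n + 1) ≤ riccatiMap (β (n + 1)) (v n))
    (hwrec : ∀ n ≥ N, riccatiMap (β (n + 1)) (w n) ≤ w (n + 1))
    (s : ℕ) {n : ℕ} (hn : N ≤ n) :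
    riccatiBackward β w s n ≤ riccatiBackward β w (s + 1) n := by
  rcases lt_trichotomy s n with hsn | rfl | hns
  · rw [riccatiBackward_of_le hsn.le, riccatiBackward_of_le hsn]
  · rw [riccatiBackward_of_le le_rfl]
    exact (riccatiBackward_mem_Icc hw hv hwv hvrec hwrec (s + 1) hn).1
  · have ih := riccatiBackward_le_succ hw hv hwv hβ hvrec hwrec s (Nat.le_succ_of_le hn)
    have hlt : riccatiBackward β w (s + 1) (n + 1) < 1 :=
      (riccatiBackward_mem_Icc hw hv hwv hvrec hwrec (s + 1) (Nat.le_succ_of_le hn)).2.trans_lt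
        (hv _ (by omega))
    rw [riccatiBackward_of_lt hns, riccatiBackward_of_lt (hns.trans s.lt_succ_self)]
    exact riccatiInv_le_riccatiInv (hβ _ (by omega)) ih hlt
termination_by s - n

end Backward

theorem exists_riccati_solution_mem_Icc {β v w : ℕ → ℝ} {N : ℕ}
    (hw : ∀ n ≥ N, -1 < w n) (hv : ∀ n ≥ N, v n < 1)
    (hwv : ∀ n ≥ N, w n ≤ v n) (hβ : ∀ n > N, 0 ≤ 1 + β n)
    (hvrec : ∀ n ≥ N, v (n + 1) ≤ riccatiMap (β (n + 1)) (v n))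
    (hwrec : ∀ n ≥ N, riccatiMap (β (n + 1)) (w n) ≤ w (n + 1)) :
    ∃ X : ℕ → ℝ, (∀ n ≥ N, X (n + 1) = riccatiMap (β (n + 1)) (X n)) ∧
      ∀ n ≥ N, X n ∈ Set.Icc (w n) (v n) := by
  set Y := riccatiBackward β w
  have hY : ∀ s, ∀ n ≥ N, Y s n ∈ Set.Icc (w n) (v n) := fun s _ hn =>
    riccatiBackward_mem_Icc hw hv hwv hvrec hwrec s hn
  have hbdd : ∀ n ≥ N, BddAbove (Set.range fun s => Y s n) := fun n hn =>
    ⟨v n, by rintro _ ⟨s, rfl⟩; exact (hY s n hn).2⟩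
  have htend : ∀ n ≥ N, Tendsto (fun s => Y s n) atTop (𝓝 (⨆ s, Y s n)) := fun n hn =>
    tendsto_atTop_ciSup (monotone_nat_of_le_succ fun s =>
      riccatiBackward_le_succ hw hv hwv hβ hvrec hwrec s hn) (hbdd n hn)
  have hmem : ∀ n ≥ N, (⨆ s, Y s n) ∈ Set.Icc (w n) (v n) := fun n hn =>
    ⟨(hY 0 n hn).1.trans (le_ciSup (hbdd n hn) 0), ciSup_le fun s => (hY s n hn).2⟩
  refine ⟨fun n => ⨆ s, Y s n, fun n hn => ?_, hmem⟩
  have hlt : (⨆ s, Y s (n + 1)) < 1 := (hmem (n + 1) (by omega)).2.trans_lt (hv _ (by omega))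
  refine (riccatiInv_eq_iff hlt ((hw n hn).trans_le (hmem n hn).1)).1 ?_
  refine tendsto_nhds_unique (((continuousAt_riccatiInv hlt).tendsto.comp
    (htend (n + 1) (by omega))).congr' ?_) (htend n hn)
  filter_upwards [eventually_gt_atTop n] with s hs
  exact (riccatiBackward_of_lt hs).symm

end

/-- Uniform-in-λ Kelley theorem: existence of a solution of the Riccati recurrence
trapped between a majorant and a minorant (backward construction). -/
theorem kelley_uniform_existence (I : Set ℝ) (N : ℕ) (β v w : ℕ → ℝ → ℝ)
    (hvw : ∀ t ∈ I, ∀ n ≥ N, w n t ≤ v n t)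
    (hvbd : ∃ c < (1 : ℝ), ∀ t ∈ I, ∀ n ≥ N, |v n t| ≤ c)
    (hwbd : ∃ c < (1 : ℝ), ∀ t ∈ I, ∀ n ≥ N, |w n t| ≤ c)
    (hβ : ∀ n > N, ∀ t ∈ I, 0 ≤ 1 + β n t)
    (hvrec : ∀ n > N, ∀ t ∈ I,
      v n t ≤ (1 + β n t) * v (n - 1) t / (1 + v (n - 1) t) - β n t)
    (hwrec : ∀ n > N, ∀ t ∈ I,
      w n t ≥ (1 + β n t) * w (n - 1) t / (1 + w (n - 1) t) - β n t) :
    ∀ t ∈ I, ∃ X : ℕ → ℝ,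
      (∀ n > N, X n = (1 + β n t) * X (n - 1) / (X (n - 1) + 1) - β n t) ∧
      ∀ n ≥ N, w n t ≤ X n ∧ X n ≤ v n t := by
  intro t ht
  obtain ⟨cv, hcv, hv⟩ := hvbd
  obtain ⟨cw, hcw, hw⟩ := hwbd
  obtain ⟨X, hX, hXmem⟩ := exists_riccati_solution_mem_Icc (β := (β · t)) (v := (v · t))
    (w := (w · t)) (N := N)
    (fun n hn => by linarith [neg_abs_le (w n t), hw t ht n hn])
    (fun n hn => by linarith [le_abs_self (v n t), hv t ht n hn])
    (fun n hn => hvw t ht n hn) (fun n hn => hβ n hn t ht)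
    (fun n hn => by simpa [riccatiMap] using hvrec (n + 1) (by omega) t ht)
    (fun n hn => by simpa [riccatiMap] using hwrec (n + 1) (by omega) t ht)
  refine ⟨X, fun n hn => ?_, hXmem⟩
  obtain ⟨m, rfl⟩ : ∃ m, n = m + 1 := ⟨n - 1, by omega⟩
  rw [hX m (by omega), riccatiMap, Nat.add_sub_cancel, add_comm (X m)]
end

section
/- Let I ⊂ ℝ, 0 < p < 1, and ψ₀ : I → ℝ with inf_{λ∈I} ψ₀(λ) > 0 and sup_{λ∈I} ψ₀(λ) < ∞. Suppose (φ_n(λ)) satisfies φ_n(λ) = Σ_{k=0}^{M} ψ_k(λ) n^{-s_k} + õ_I(n^{-p-1}) with p = s₀ < s_k ≤ p+1 and each ψ_k bounded on I. Then φ_n(λ) − φ_{n-1}(λ) = −p·ψ₀(λ)·n^{-p-1} + õ_I(n^{-p-1}) as n → ∞, where õ_I denotes a remainder r_n(λ) with sup_{λ∈I}|r_n(λ)| / n^{-p-1} → 0. -/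
/-!
Uniform little-o on `I` is little-o along the filter `atTop ×ˢ 𝓟 I` on `ℕ × ℝ`, so the usual
calculus of `=o` applies. Subtracting the expansions at `n` and `n - 1` leaves the two remainders,
both `o(n^{-p-1})` because `(n - 1)^{-p-1} ~ n^{-p-1}`, plus the bounded coefficients `ψ_k(λ)` times
the backward differences `n^{-s_k} - (n - 1)^{-s_k} = -s_k n^{-s_k-1} + o(n^{-s_k-1})`. For `k ≥ 1`
these are `o(n^{-p-1})` since `s_k > p`; for `k = 0` the main term cancels `p ψ_0(λ) n^{-p-1}`.
-/

/-- `r_n(λ) = õ_I(h_n)`: the remainder is uniformly little-o of `h_n` on `I`. -/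
def LittleOI (I : Set ℝ) (r : ℕ → ℝ → ℝ) (h : ℕ → ℝ) : Prop :=
  ∀ ε > (0 : ℝ), ∃ N : ℕ, ∀ n > N, ∀ t ∈ I, |r n t| ≤ ε * |h n|

open Filter Topology Asymptotics

theorem littleOI_iff_isLittleO {I : Set ℝ} {r : ℕ → ℝ → ℝ} {h : ℕ → ℝ} :
    LittleOI I r h ↔ (fun q : ℕ × ℝ => r q.1 q.2) =o[atTop ×ˢ 𝓟 I] (fun q => h q.1) := by
  simp only [LittleOI, isLittleO_iff, eventually_prod_principal_iff,
    atTop_basis_Ioi.eventually_iff, Real.norm_eq_abs, true_and, Set.mem_Ioi]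

theorem Asymptotics.IsLittleO.prod_principal_mul_of_bounded {α β : Type*} {l : Filter α}
    {a g : α → ℝ} (ha : a =o[l] g) {I : Set β} {ψ : β → ℝ} {C : ℝ} (hψ : ∀ t ∈ I, |ψ t| ≤ C) :
    (fun q : α × β => ψ q.2 * a q.1) =o[l ×ˢ 𝓟 I] (fun q => g q.1) := by
  have hψ' : (fun q : α × β => ψ q.2) =O[l ×ˢ 𝓟 I] (fun _ => (1 : ℝ)) :=
    IsBigO.of_bound C <| eventually_prod_principal_iff.2 <|
      Eventually.of_forall fun _ t ht => by simpa using hψ t ht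
  simpa using hψ'.mul_isLittleO (ha.comp_tendsto tendsto_fst)

theorem Asymptotics.IsLittleO.prod_comp_pred {β : Type*} {l : Filter β} {R : ℕ → β → ℝ} {g : ℕ → ℝ}
    (hR : (fun q : ℕ × β => R q.1 q.2) =o[atTop ×ˢ l] (fun q => g q.1))
    (hg : (fun n => g (n - 1)) =O[atTop] g) :
    (fun q : ℕ × β => R (q.1 - 1) q.2) =o[atTop ×ˢ l] (fun q => g q.1) :=
  (hR.comp_tendsto ((tendsto_sub_atTop_nat 1).prodMap tendsto_id)).trans_isBigO
    (hg.comp_tendsto tendsto_fst)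

theorem isLittleO_natCast_rpow_rpow {a b : ℝ} (hab : a < b) :
    (fun n : ℕ => (n : ℝ) ^ a) =o[atTop] (fun n : ℕ => (n : ℝ) ^ b) := by
  have hlim : Tendsto (fun x : ℝ => x ^ (a - b)) atTop (𝓝 0) := by
    simpa using tendsto_rpow_neg_atTop (sub_pos.2 hab)
  have hreal : (fun x : ℝ => x ^ a) =o[atTop] (fun x : ℝ => x ^ b) := by
    refine ((isLittleO_one_iff ℝ).2 hlim).mul_isBigO (isBigO_refl (fun x : ℝ => x ^ b) _)
      |>.congr' ?_ (by simp)
    filter_upwards [eventually_gt_atTop 0] with x hx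
    rw [← Real.rpow_add hx, sub_add_cancel]
  exact hreal.comp_tendsto tendsto_natCast_atTop_atTop

theorem isBigO_natCast_pred_rpow (a : ℝ) :
    (fun n : ℕ => ((n - 1 : ℕ) : ℝ) ^ a) =O[atTop] (fun n : ℕ => (n : ℝ) ^ a) := by
  have hpred : (fun n : ℕ => ((n - 1 : ℕ) : ℝ)) ~[atTop] (fun n : ℕ => (n : ℝ)) := by
    refine ((IsEquivalent.refl).add_const_of_norm_tendsto_atTop (c := -1) ?_).congr_left ?_
    · exact tendsto_norm_atTop_atTop.comp tendsto_natCast_atTop_atTop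
    · filter_upwards [eventually_ge_atTop 1] with n hn
      simp [Nat.cast_sub hn, sub_eq_add_neg]
  exact (hpred.rpow (fun n => Nat.cast_nonneg n)).isBigO

theorem hasDerivAt_one_sub_rpow_zero (s : ℝ) :
    HasDerivAt (fun x : ℝ => (1 - x) ^ (-s)) s 0 := by
  simpa using ((hasDerivAt_id (0 : ℝ)).const_sub 1).rpow_const (p := -s) (Or.inl (by norm_num))

/-- First-order Taylor expansion of `x ↦ (1 - x) ^ (-s)` at `x = 1/n`, scaled by `n ^ (-s)`. -/
theorem isLittleO_rpow_sub_rpow_pred_add (s : ℝ) :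
    (fun n : ℕ => (n : ℝ) ^ (-s) - ((n - 1 : ℕ) : ℝ) ^ (-s) + s * (n : ℝ) ^ (-s - 1))
      =o[atTop] (fun n : ℕ => (n : ℝ) ^ (-s - 1)) := by
  have htaylor := (hasDerivAt_one_sub_rpow_zero s).isLittleO.comp_tendsto
    tendsto_one_div_atTop_nhds_zero_nat
  refine ((isBigO_refl (fun n : ℕ => (n : ℝ) ^ (-s)) atTop).mul_isLittleO htaylor).neg_left.congr'
    ?_ ?_
  all_goals filter_upwards [eventually_ge_atTop 1] with n hn
  all_goals have hn0 : (0 : ℝ) < n := by exact_mod_cast hn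
  · have hsplit : ((n - 1 : ℕ) : ℝ) ^ (-s) = (n : ℝ) ^ (-s) * (1 - 1 / (n : ℝ)) ^ (-s) := by
      rw [← Real.mul_rpow hn0.le (by rw [sub_nonneg, div_le_one hn0]; exact_mod_cast hn)]
      congr 1
      rw [Nat.cast_sub hn]; field_simp; simp
    simp only [Function.comp, sub_zero, smul_eq_mul, Real.one_rpow, hsplit,
      Real.rpow_sub hn0, Real.rpow_one]
    field_simp
    ring
  · simp [Real.rpow_sub hn0, div_eq_mul_inv]

theorem isLittleO_rpow_sub_rpow_pred {p s : ℝ} (hps : p < s) :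
    (fun n : ℕ => (n : ℝ) ^ (-s) - ((n - 1 : ℕ) : ℝ) ^ (-s))
      =o[atTop] (fun n : ℕ => (n : ℝ) ^ (-p - 1)) := by
  have hpow := isLittleO_natCast_rpow_rpow (show -s - 1 < -p - 1 by linarith)
  refine ((isLittleO_rpow_sub_rpow_pred_add s).trans hpow).sub (hpow.const_mul_left s)
    |>.congr_left fun n => ?_
  ring

theorem expansion_difference_asymptotics_general (I : Set ℝ) (p : ℝ)
    (M : ℕ) (ψ : ℕ → ℝ → ℝ) (s : ℕ → ℝ) (φ : ℕ → ℝ → ℝ)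
    (hs0 : s 0 = p)
    (hs : ∀ k, 1 ≤ k → k ≤ M → p < s k ∧ s k ≤ p + 1)
    (hψbdd : ∀ k ≤ M, ∃ C : ℝ, ∀ t ∈ I, |ψ k t| ≤ C)
    (hφ : LittleOI I
      (fun n t => φ n t - ∑ k ∈ Finset.range (M + 1), ψ k t * (n : ℝ) ^ (-(s k)))
      (fun n => (n : ℝ) ^ (-p - 1))) :
    LittleOI I (fun n t => φ n t - φ (n - 1) t + p * ψ 0 t * (n : ℝ) ^ (-p - 1))
      (fun n => (n : ℝ) ^ (-p - 1)) := by
  rw [littleOI_iff_isLittleO] at hφ ⊢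
  choose C hC using hψbdd
  have hlead : (fun q : ℕ × ℝ => ψ 0 q.2 * ((q.1 : ℝ) ^ (-p) - ((q.1 - 1 : ℕ) : ℝ) ^ (-p)
      + p * (q.1 : ℝ) ^ (-p - 1))) =o[atTop ×ˢ 𝓟 I] (fun q => (q.1 : ℝ) ^ (-p - 1)) :=
    (isLittleO_rpow_sub_rpow_pred_add p).prod_principal_mul_of_bounded (hC 0 M.zero_le)
  have htail : (fun q : ℕ × ℝ => ∑ k ∈ Finset.range M, ψ (k + 1) q.2 *
      ((q.1 : ℝ) ^ (-s (k + 1)) - ((q.1 - 1 : ℕ) : ℝ) ^ (-s (k + 1))))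
      =o[atTop ×ˢ 𝓟 I] (fun q => (q.1 : ℝ) ^ (-p - 1)) := by
    refine IsLittleO.fun_sum fun k hk => ?_
    have hkM : k + 1 ≤ M := Finset.mem_range.1 hk
    exact (isLittleO_rpow_sub_rpow_pred (hs (k + 1) k.succ_pos hkM).1).prod_principal_mul_of_bounded
      (hC (k + 1) hkM)
  have hshift := hφ.prod_comp_pred (R := fun n t => φ n t -
    ∑ k ∈ Finset.range (M + 1), ψ k t * (n : ℝ) ^ (-(s k))) (g := fun n : ℕ => (n : ℝ) ^ (-p - 1))
    (isBigO_natCast_pred_rpow _)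
  refine ((hφ.sub hshift).add (hlead.add htail))
    |>.congr_left fun q => ?_
  simp only [Finset.sum_range_succ', hs0, mul_sub, Finset.sum_sub_distrib]
  ring

/-- Uniform "differentiability in n" of the asymptotic expansion:
`φ_n(λ) − φ_{n-1}(λ) = −p·ψ₀(λ)·n^{-p-1} + õ_I(n^{-p-1})`. -/
theorem expansion_difference_asymptotics (I : Set ℝ) (p : ℝ) (hp0 : 0 < p) (hp1 : p < 1)
    (M : ℕ) (ψ : ℕ → ℝ → ℝ) (s : ℕ → ℝ) (φ : ℕ → ℝ → ℝ)
    (hs0 : s 0 = p)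
    (hs : ∀ k, 1 ≤ k → k ≤ M → p < s k ∧ s k ≤ p + 1)
    (hψ0pos : ∃ c > (0 : ℝ), ∀ t ∈ I, c ≤ ψ 0 t)
    (hψbdd : ∀ k ≤ M, ∃ C : ℝ, ∀ t ∈ I, |ψ k t| ≤ C)
    (hφ : LittleOI I
      (fun n t => φ n t - ∑ k ∈ Finset.range (M + 1), ψ k t * (n : ℝ) ^ (-(s k)))
      (fun n => (n : ℝ) ^ (-p - 1))) :
    LittleOI I (fun n t => φ n t - φ (n - 1) t + p * ψ 0 t * (n : ℝ) ^ (-p - 1))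
      (fun n => (n : ℝ) ^ (-p - 1)) :=
  expansion_difference_asymptotics_general I p M ψ s φ hs0 hs hψbdd hφ
end

section
/- Let I ⊂ ℝ, 0 < p < 1, and suppose (φ_n(λ)) satisfies φ_n(λ) = Σ_{k=0}^{M} ψ_k(λ)n^{-s_k} + õ_I(n^{-p-1}) with p = s₀ < s_k ≤ p+1, ψ₀ uniformly positive and bounded on I, and ψ_k bounded for k ≥ 1. Then for any real constants B⁻ < p/2 < B⁺ there exists N ∈ ℕ such that the sequences w_n^±(λ) := ±φ_n(λ) + B^± n^{-1} satisfy w_n^±(λ)·(1 + w_{n-1}^±(λ)) ≥ w_{n-1}^±(λ) + φ_n(λ)² for all n > N and all λ ∈ I. -/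
/-!
Write `a = φ_n`, `b = φ_{n-1}`. For `w = φ + B/n` the defect `w_n (1 + w_{n-1}) - w_{n-1} - φ_n²`
equals `(a - b) + a (b - a) + B (a/(n-1) + b/n) + B (1/n - 1/(n-1)) + B²/(n (n-1))`.
The expansion gives `a = ψ₀ n^{-p} + o(n^{-p})` and `b - a = p ψ₀ n^{-p-1} + o(n^{-p-1})`,
and since `0 < p < 1` all remaining terms are `o(n^{-p-1})`; hence the defect is
`(2B - p) ψ₀ n^{-p-1} + o(n^{-p-1})`, which is eventually nonnegative when `2B > p`.
Replacing `φ, ψ₀` by `-φ, -ψ₀` gives `(p - 2B) ψ₀ n^{-p-1} + o(n^{-p-1})` for `w⁻`.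
Uniformity on `I` is handled by working along the filter `atTop ×ˢ 𝓟 I` on `ℕ × ℝ`.
-/

open Filter Topology Asymptotics

theorem isLittleO_rpow_rpow_atTop_of_lt {a b : ℝ} (hab : a < b) :
    (fun x : ℝ => x ^ a) =o[atTop] fun x => x ^ b := by
  have hlim : Tendsto (fun x : ℝ => x ^ (a - b)) atTop (𝓝 0) := by
    simpa using tendsto_rpow_neg_atTop (sub_pos.2 hab)
  refine ((isLittleO_one_iff ℝ).2 hlim |>.mul_isBigO (isBigO_refl (fun x : ℝ => x ^ b) _)).congr'
    ?_ (.of_forall fun x => one_mul _)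
  filter_upwards [eventually_gt_atTop 0] with x hx
  rw [← Real.rpow_add hx, sub_add_cancel]

theorem isLittleO_sub_one_rpow (r : ℝ) :
    (fun x : ℝ => (x - 1) ^ r - x ^ r + r * x ^ (r - 1)) =o[atTop] fun x => x ^ (r - 1) := by
  have hderiv : HasDerivAt (fun y : ℝ => (1 - y) ^ r) (-r) 0 := by
    simpa using ((hasDerivAt_id (0 : ℝ)).const_sub 1).rpow_const (p := r) (by simp)
  have hsmall := hderiv.isLittleO.comp_tendsto tendsto_inv_atTop_zero
  refine ((isBigO_refl (fun x : ℝ => x ^ r) _).mul_isLittleO hsmall).congr' ?_ ?_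
  · filter_upwards [eventually_gt_atTop 1] with x hx
    have hx0 : 0 < x := by linarith
    have hfactor : x ^ r * (1 - x⁻¹) ^ r = (x - 1) ^ r := by
      rw [← Real.mul_rpow hx0.le (by simp [inv_le_one_of_one_le₀ hx.le]), mul_sub, mul_one,
        mul_inv_cancel₀ hx0.ne']
    simp only [Function.comp_apply, sub_zero, smul_eq_mul, Real.one_rpow]
    rw [Real.rpow_sub_one hx0.ne', ← hfactor]
    field_simp
    ring
  · filter_upwards [eventually_gt_atTop 0] with x hx
    simp [Real.rpow_sub_one hx.ne', div_eq_mul_inv]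

theorem isBigO_sub_one_rpow_sub (r : ℝ) :
    (fun x : ℝ => (x - 1) ^ r - x ^ r) =O[atTop] fun x => x ^ (r - 1) :=
  ((isLittleO_sub_one_rpow r).isBigO.sub ((isBigO_refl _ _).const_mul_left r)).congr_left
    fun x => by ring

theorem isBigO_sub_one_rpow (r : ℝ) :
    (fun x : ℝ => (x - 1) ^ r) =O[atTop] fun x => x ^ r :=
  ((isBigO_refl _ _).add ((isBigO_sub_one_rpow_sub r).trans
    (isLittleO_rpow_rpow_atTop_of_lt (sub_one_lt r)).isBigO)).congr_left fun x => by ring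

theorem isBigO_sub_one_inv :
    (fun x : ℝ => (x - 1)⁻¹) =O[atTop] fun x => x⁻¹ := by
  refine IsBigO.of_bound 2 ?_
  filter_upwards [eventually_ge_atTop 2] with x hx
  rw [Real.norm_of_nonneg (inv_nonneg.2 (by linarith)),
    Real.norm_of_nonneg (inv_nonneg.2 (by linarith)), inv_le_iff_one_le_mul₀ (by linarith)]
  field_simp
  linarith

theorem LittleOI.isLittleO {I : Set ℝ} {r : ℕ → ℝ → ℝ} {h : ℕ → ℝ} (hr : LittleOI I r h) :
    (fun x : ℕ × ℝ => r x.1 x.2) =o[atTop ×ˢ 𝓟 I] fun x => h x.1 := by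
  refine IsLittleO.of_bound fun ε hε => ?_
  obtain ⟨N, hN⟩ := hr ε hε
  rw [eventually_prod_principal_iff]
  filter_upwards [eventually_gt_atTop N] with n hn t ht
  simpa only [Real.norm_eq_abs] using hN n hn t ht

theorem isBigO_one_comp_snd_of_bounded {β : Type*} {f : Filter β} {I : Set ℝ} {ψ : ℝ → ℝ}
    (hψ : ∃ C, ∀ t ∈ I, |ψ t| ≤ C) :
    (fun x : β × ℝ => ψ x.2) =O[f ×ˢ 𝓟 I] fun _ => (1 : ℝ) := by
  obtain ⟨C, hC⟩ := hψ
  refine IsBigO.of_bound C (eventually_prod_principal_iff.2 (.of_forall fun _ t ht => ?_))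
  simpa using hC t ht

section Expansion

variable {I : Set ℝ} {p : ℝ} {M : ℕ} {ψ : ℕ → ℝ → ℝ} {s : ℕ → ℝ} {φ : ℕ → ℝ → ℝ}

theorem isLittleO_sub_leading_term (hs0 : s 0 = p) (hs : ∀ k, 1 ≤ k → k ≤ M → p < s k)
    (hψ : ∀ k ≤ M, (fun x : ℕ × ℝ => ψ k x.2) =O[atTop ×ˢ 𝓟 I] fun _ => (1 : ℝ))
    (hr : (fun x : ℕ × ℝ =>
        φ x.1 x.2 - ∑ k ∈ Finset.range (M + 1), ψ k x.2 * (x.1 : ℝ) ^ (-(s k)))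
      =o[atTop ×ˢ 𝓟 I] fun x => (x.1 : ℝ) ^ (-p - 1)) :
    (fun x : ℕ × ℝ => φ x.1 x.2 - ψ 0 x.2 * (x.1 : ℝ) ^ (-p))
      =o[atTop ×ˢ 𝓟 I] fun x => (x.1 : ℝ) ^ (-p) := by
  have hν : Tendsto (fun x : ℕ × ℝ => (x.1 : ℝ)) (atTop ×ˢ 𝓟 I) atTop :=
    tendsto_natCast_atTop_atTop.comp tendsto_fst
  have hterm : ∀ k ∈ Finset.range M,
      (fun x : ℕ × ℝ => ψ (k + 1) x.2 * (x.1 : ℝ) ^ (-s (k + 1)))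
        =o[atTop ×ˢ 𝓟 I] fun x => (x.1 : ℝ) ^ (-p) := fun k hk =>
    ((hψ (k + 1) (Finset.mem_range.1 hk)).mul_isLittleO
      ((isLittleO_rpow_rpow_atTop_of_lt (neg_lt_neg (hs (k + 1) (Nat.le_add_left 1 k)
        (Finset.mem_range.1 hk)))).comp_tendsto hν)).congr_right fun x => one_mul _
  have hrem := hr.trans ((isLittleO_rpow_rpow_atTop_of_lt (sub_one_lt (-p))).comp_tendsto hν)
  refine ((IsLittleO.fun_sum hterm).add hrem).congr_left fun x => ?_
  rw [Finset.sum_range_succ', hs0]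
  ring

theorem isLittleO_backward_difference (hs0 : s 0 = p) (hs : ∀ k, 1 ≤ k → k ≤ M → p < s k)
    (hψ : ∀ k ≤ M, (fun x : ℕ × ℝ => ψ k x.2) =O[atTop ×ˢ 𝓟 I] fun _ => (1 : ℝ))
    (hr : (fun x : ℕ × ℝ =>
        φ x.1 x.2 - ∑ k ∈ Finset.range (M + 1), ψ k x.2 * (x.1 : ℝ) ^ (-(s k)))
      =o[atTop ×ˢ 𝓟 I] fun x => (x.1 : ℝ) ^ (-p - 1)) :
    (fun x : ℕ × ℝ => φ (x.1 - 1) x.2 - φ x.1 x.2 - p * ψ 0 x.2 * (x.1 : ℝ) ^ (-p - 1))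
      =o[atTop ×ˢ 𝓟 I] fun x => (x.1 : ℝ) ^ (-p - 1) := by
  have hν : Tendsto (fun x : ℕ × ℝ => (x.1 : ℝ)) (atTop ×ˢ 𝓟 I) atTop :=
    tendsto_natCast_atTop_atTop.comp tendsto_fst
  have hlead : (fun x : ℕ × ℝ => ψ 0 x.2 *
      (((x.1 : ℝ) - 1) ^ (-p) - (x.1 : ℝ) ^ (-p) + -p * (x.1 : ℝ) ^ (-p - 1)))
      =o[atTop ×ˢ 𝓟 I] fun x => (x.1 : ℝ) ^ (-p - 1) :=
    ((hψ 0 M.zero_le).mul_isLittleO ((isLittleO_sub_one_rpow (-p)).comp_tendsto hν)).congr_right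
      fun x => one_mul _
  have hterm : ∀ k ∈ Finset.range M, (fun x : ℕ × ℝ => ψ (k + 1) x.2 *
      (((x.1 : ℝ) - 1) ^ (-s (k + 1)) - (x.1 : ℝ) ^ (-s (k + 1))))
      =o[atTop ×ˢ 𝓟 I] fun x => (x.1 : ℝ) ^ (-p - 1) := fun k hk =>
    ((hψ (k + 1) (Finset.mem_range.1 hk)).mul_isLittleO
      (((isBigO_sub_one_rpow_sub _).trans_isLittleO (isLittleO_rpow_rpow_atTop_of_lt
        (sub_lt_sub_right (neg_lt_neg (hs (k + 1) (Nat.le_add_left 1 k)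
          (Finset.mem_range.1 hk))) 1))).comp_tendsto hν)).congr_right fun x => one_mul _
  have hshift : Tendsto (fun x : ℕ × ℝ => (x.1 - 1, x.2)) (atTop ×ˢ 𝓟 I) (atTop ×ˢ 𝓟 I) :=
    ((tendsto_sub_atTop_nat 1).comp tendsto_fst).prodMk tendsto_snd
  have hcast : ∀ᶠ x : ℕ × ℝ in atTop ×ˢ 𝓟 I, ((x.1 - 1 : ℕ) : ℝ) = (x.1 : ℝ) - 1 :=
    (tendsto_fst.eventually_ge_atTop 1).mono fun x hx => by rw [Nat.cast_sub hx, Nat.cast_one]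
  have hrem_shift := (hr.comp_tendsto hshift).trans_isBigO
    (((isBigO_sub_one_rpow (-p - 1)).comp_tendsto hν).congr' (hcast.mono fun x hx => by
      simp only [Function.comp_apply, hx]) .rfl)
  refine ((hlead.add (IsLittleO.fun_sum hterm)).add (hrem_shift.sub hr)).congr' ?_ .rfl
  filter_upwards [hcast] with x hx
  simp only [Function.comp_apply, hx, Finset.sum_range_succ', hs0, mul_sub,
    Finset.sum_sub_distrib]
  ring

end Expansion

theorem isLittleO_majorant_defect {α : Type*} {l : Filter α} {ν a b u : α → ℝ} {p : ℝ}
    (hp0 : 0 < p) (hp1 : p < 1) (hν : Tendsto ν l atTop) (hu : u =O[l] fun _ => (1 : ℝ))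
    (ha : (fun x => a x - u x * ν x ^ (-p)) =o[l] fun x => ν x ^ (-p))
    (hb : (fun x => b x - a x - p * u x * ν x ^ (-p - 1)) =o[l] fun x => ν x ^ (-p - 1))
    (B : ℝ) :
    (fun x => (a x + B * (ν x)⁻¹) * (1 + (b x + B * (ν x - 1)⁻¹)) - (b x + B * (ν x - 1)⁻¹)
      - a x ^ 2 - (2 * B - p) * u x * ν x ^ (-p - 1)) =o[l] fun x => ν x ^ (-p - 1) := by
  have hsplit : ∀ᶠ x in l, ν x ^ (-p - 1) = ν x ^ (-p) * (ν x)⁻¹ := by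
    filter_upwards [hν.eventually_gt_atTop 0] with x hx
    rw [Real.rpow_sub_one hx.ne', div_eq_mul_inv]
  have hpow : (fun x => ν x ^ (-p)) =o[l] fun _ => (1 : ℝ) :=
    (isLittleO_one_iff ℝ).2 ((tendsto_rpow_neg_atTop hp0).comp hν)
  have hinv : (fun x => (ν x)⁻¹) =o[l] fun _ => (1 : ℝ) :=
    (isLittleO_one_iff ℝ).2 (tendsto_inv_atTop_zero.comp hν)
  have hinv_pow : (fun x => (ν x)⁻¹) =o[l] fun x => ν x ^ (-p) := by
    refine ((isLittleO_rpow_rpow_atTop_of_lt (show (-1 : ℝ) < -p by linarith)).comp_tendsto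
      hν).congr' ?_ .rfl
    filter_upwards [hν.eventually_gt_atTop 0] with x hx
    simp [Real.rpow_neg_one]
  have hinv_mul_inv : (fun x => (ν x)⁻¹ * (ν x - 1)⁻¹) =o[l] fun x => ν x ^ (-p - 1) := by
    refine (hinv_pow.mul_isBigO (isBigO_sub_one_inv.comp_tendsto hν)).congr' .rfl ?_
    filter_upwards [hsplit] with x hx
    simp [hx]
  have ha_pow : a =O[l] fun x => ν x ^ (-p) :=
    (ha.isBigO.add ((hu.mul (isBigO_refl (fun x => ν x ^ (-p)) l)).congr_right
      fun x => one_mul _)).congr_left fun x => by ring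
  have hba_pow : (fun x => b x - a x) =O[l] fun x => ν x ^ (-p - 1) :=
    (hb.isBigO.add (((hu.const_mul_left p).mul (isBigO_refl (fun x => ν x ^ (-p - 1)) l))
      |>.congr_right fun x => one_mul _)).congr_left fun x => by ring
  have hcross : (fun x => a x * (b x - a x)) =o[l] fun x => ν x ^ (-p - 1) :=
    ((ha_pow.trans_isLittleO hpow).mul_isBigO hba_pow).congr_right fun x => one_mul _
  have hcoef : (fun x => a x - 1 + B) =O[l] fun _ => (1 : ℝ) :=
    ((ha_pow.trans hpow.isBigO).sub (isBigO_const_const 1 one_ne_zero l)).add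
      (isBigO_const_const B one_ne_zero l)
  have hcoef_inv : (fun x => (a x - 1 + B) * ((ν x)⁻¹ * (ν x - 1)⁻¹)) =o[l]
      fun x => ν x ^ (-p - 1) :=
    (hcoef.mul_isLittleO hinv_mul_inv).congr_right fun x => one_mul _
  have herr_inv : (fun x => (a x - u x * ν x ^ (-p)) * (ν x)⁻¹) =o[l] fun x => ν x ^ (-p - 1) :=
    (ha.mul_isBigO (isBigO_refl _ _)).congr' .rfl (hsplit.mono fun x hx => hx.symm)
  have hba_inv : (fun x => (b x - a x) * (ν x)⁻¹) =o[l] fun x => ν x ^ (-p - 1) :=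
    (hba_pow.mul_isLittleO hinv).congr_right fun x => mul_one _
  -- These terms add up to the defect since `1/(ν - 1) - 1/ν = 1/(ν (ν - 1))`.
  refine ((((hb.neg_left.add hcross).add (hcoef_inv.const_mul_left B)).add
    (herr_inv.const_mul_left (2 * B))).add (hba_inv.const_mul_left B)).congr' ?_ .rfl
  filter_upwards [hsplit, hν.eventually_gt_atTop 1] with x hx hν1
  have : ν x - 1 ≠ 0 := by linarith
  have : ν x ≠ 0 := by linarith
  rw [hx]
  field_simp
  ring

theorem eventually_nonneg_of_isLittleO_sub_mul {α : Type*} {l : Filter α} {f u h : α → ℝ}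
    {κ c : ℝ} (hκ : 0 < κ) (hc : 0 < c) (hu : ∀ᶠ x in l, c ≤ u x) (hh : ∀ᶠ x in l, 0 ≤ h x)
    (hf : (fun x => f x - κ * u x * h x) =o[l] h) : ∀ᶠ x in l, 0 ≤ f x := by
  filter_upwards [hf.bound (mul_pos hκ hc), hu, hh] with x hfx hux hhx
  rw [Real.norm_eq_abs, Real.norm_eq_abs, abs_of_nonneg hhx] at hfx
  nlinarith [(abs_le.1 hfx).1, mul_nonneg (mul_nonneg hκ.le hhx) (sub_nonneg.2 hux)]

/-- Construction of uniform majorant sequences `w_n^± = ±φ_n + B^± n^{-1}`: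
they satisfy `w_n^±(1 + w_{n-1}^±) ≥ w_{n-1}^± + φ_n²` for all `n > N`, uniformly on `I`. -/
theorem uniform_majorant_sequences (I : Set ℝ) (p : ℝ) (hp0 : 0 < p) (hp1 : p < 1)
    (M : ℕ) (ψ : ℕ → ℝ → ℝ) (s : ℕ → ℝ) (φ : ℕ → ℝ → ℝ)
    (hs0 : s 0 = p)
    (hs : ∀ k, 1 ≤ k → k ≤ M → p < s k ∧ s k ≤ p + 1)
    (hψ0pos : ∃ c > (0 : ℝ), ∀ t ∈ I, c ≤ ψ 0 t)
    (hψbdd : ∀ k ≤ M, ∃ C : ℝ, ∀ t ∈ I, |ψ k t| ≤ C)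
    (hφ : LittleOI I
      (fun n t => φ n t - ∑ k ∈ Finset.range (M + 1), ψ k t * (n : ℝ) ^ (-(s k)))
      (fun n => (n : ℝ) ^ (-p - 1)))
    (Bp Bm : ℝ) (hBm : Bm < p / 2) (hBp : p / 2 < Bp) :
    ∃ N : ℕ, ∀ n > N, ∀ t ∈ I,
      (φ n t + Bp * (n : ℝ)⁻¹) * (1 + (φ (n - 1) t + Bp * ((n : ℝ) - 1)⁻¹)) ≥
        (φ (n - 1) t + Bp * ((n : ℝ) - 1)⁻¹) + (φ n t) ^ 2 ∧
      (-φ n t + Bm * (n : ℝ)⁻¹) * (1 + (-φ (n - 1) t + Bm * ((n : ℝ) - 1)⁻¹)) ≥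
        (-φ (n - 1) t + Bm * ((n : ℝ) - 1)⁻¹) + (φ n t) ^ 2 := by
  obtain ⟨c, hc, hcψ⟩ := hψ0pos
  have hν : Tendsto (fun x : ℕ × ℝ => (x.1 : ℝ)) (atTop ×ˢ 𝓟 I) atTop :=
    tendsto_natCast_atTop_atTop.comp tendsto_fst
  have hψ k (hk : k ≤ M) := isBigO_one_comp_snd_of_bounded (f := (atTop : Filter ℕ)) (hψbdd k hk)
  have hs' k (h1 : 1 ≤ k) (hM : k ≤ M) := (hs k h1 hM).1
  have hlead := isLittleO_sub_leading_term hs0 hs' hψ hφ.isLittleO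
  have hdiff := isLittleO_backward_difference hs0 hs' hψ hφ.isLittleO
  have hplus := isLittleO_majorant_defect hp0 hp1 hν (hψ 0 M.zero_le) hlead hdiff Bp
  have hminus := isLittleO_majorant_defect (a := fun x => -φ x.1 x.2)
    (b := fun x => -φ (x.1 - 1) x.2) (u := fun x => -ψ 0 x.2) hp0 hp1 hν
    (hψ 0 M.zero_le).neg_left (hlead.neg_left.congr_left fun x => by ring)
    (hdiff.neg_left.congr_left fun x => by ring) Bm
  simp only [neg_sq, mul_neg, ← neg_mul, neg_sub] at hminus
  have hψc : ∀ᶠ x : ℕ × ℝ in atTop ×ˢ 𝓟 I, c ≤ ψ 0 x.2 :=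
    eventually_prod_principal_iff.2 (.of_forall fun _ => hcψ)
  have hpow : ∀ᶠ x : ℕ × ℝ in atTop ×ˢ 𝓟 I, 0 ≤ (x.1 : ℝ) ^ (-p - 1) :=
    .of_forall fun x => Real.rpow_nonneg x.1.cast_nonneg _
  obtain ⟨N, hN⟩ := eventually_atTop.1 (eventually_prod_principal_iff.1
    ((eventually_nonneg_of_isLittleO_sub_mul (by linarith) hc hψc hpow hplus).and
      (eventually_nonneg_of_isLittleO_sub_mul (by linarith) hc hψc hpow hminus)))
  refine ⟨N, fun n hn t ht => ?_⟩
  obtain ⟨hplus_nt, hminus_nt⟩ := hN n hn.le t ht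
  constructor <;> linarith
end

section
/- Let α ∈ (1/3,1/2), c₁,c₂ > 0 with |c₁−c₂| = 1, I a bounded interval of ℝ₊, and let β_n(λ) = 4G_n(λ)/(F_n(λ)F_{n-1}(λ)) − 1 with F_n, G_n the Poincaré coefficients of the Jacobi matrix with q_n = n^α, b_n = n^α c_n (c 2-periodic with values c₁, c₂). Then uniformly for λ ∈ I, as n → ∞: β_n(λ) = −(2^{1-α}/(c₁c₂))λ n^{-α} + (2^{-2α}/(c₁c₂))(3/(c₁c₂)+1)λ² n^{-2α} + (α/(2c₁c₂))n^{-1} − (2^{-3α}/(c₁c₂)²)(3 + 4/(c₁c₂))λ³ n^{-3α} + Õ_I(n^{-1-α}). -/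
/-- Uniform big-O on `I`: `r_n(λ) = Õ_I(h_n)`. -/
def OtildeI (I : Set ℝ) (r : ℕ → ℝ → ℝ) (h : ℕ → ℝ) : Prop :=
  ∃ C > (0 : ℝ), ∃ N : ℕ, ∀ n > N, ∀ t ∈ I, |r n t| ≤ C * |h n|

/-- The 2-periodically modulated weights `b_n = n^α c_n`, `c_{2n-1} = c₁`, `c_{2n} = c₂`. -/
noncomputable def jacobiWeight (α c₁ c₂ : ℝ) (n : ℕ) : ℝ :=
  (n : ℝ) ^ α * (if Odd n then c₁ else c₂)

/-- The diagonal `q_n = n^α`. -/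
noncomputable def jacobiDiag (α : ℝ) (n : ℕ) : ℝ := (n : ℝ) ^ α

/-- The Poincaré coefficient `F_n(λ)`. -/
noncomputable def jacobiF (b q : ℕ → ℝ) (n : ℕ) (t : ℝ) : ℝ :=
  (q (2 * n + 2) - t) * (b (2 * n)) ^ 2 / ((q (2 * n) - t) * b (2 * n + 1) * b (2 * n + 2)) -
    (q (2 * n + 1) - t) * (q (2 * n + 2) - t) / (b (2 * n + 1) * b (2 * n + 2)) +
    b (2 * n + 1) / b (2 * n + 2)

/-- The Poincaré coefficient `G_n(λ)`. -/
noncomputable def jacobiG (b q : ℕ → ℝ) (n : ℕ) (t : ℝ) : ℝ :=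
  (q (2 * n + 2) - t) * b (2 * n - 1) * b (2 * n) /
    ((q (2 * n) - t) * b (2 * n + 1) * b (2 * n + 2))

/-- The Riccati coefficient `β_n(λ) = 4G_n/(F_n F_{n-1}) − 1`. -/
noncomputable def jacobiBeta (b q : ℕ → ℝ) (n : ℕ) (t : ℝ) : ℝ :=
  4 * jacobiG b q n t / (jacobiF b q n t * jacobiF b q (n - 1) t) - 1

/-!
Put `u = 1/(2n)`, `w = λ/(2n)^α` and `a_j = (1 + j u)^α`, so that `q_{2n+j} = (2n)^α a_j` and
`b_{2n+j} = (2n)^α a_j c_{2n+j}`. Since `F_n`, `G_n` are homogeneous of degree zero in `(b, q, λ)`,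
`β_n(λ)` is an explicit function `B(u, w)`, smooth near the origin, and the claimed expansion is
`P(u, w)/(c₁c₂)³` for a polynomial `P`. The common denominator of `B - P/(c₁c₂)³` tends to
`4(c₁c₂)⁵`, so it remains to show that its numerator `N` is `O(u² + |u||w| + w⁴)`.
Being `C²`, `N` has mixed difference
`N(u,w) - N(u,0) - N(0,w) + N(0,0) = O(|u||w|)`. On the axis `u = 0` all `a_j` equal `1`, and the
critical relation `|c₁ - c₂| = 1`, i.e. `c₁² + c₂² = 1 + 2c₁c₂`, makes `N(0,w)` divisible by `w⁴`.
On the axis `w = 0`, `N(u,0)` vanishes to second order because its `u`-derivative at `0` cancels.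
Finally `u² + u|w| + w⁴ = O(n^{-1-α})` uniformly for bounded `λ` as soon as `1/3 ≤ α ≤ 1`.
-/

open Filter Topology Metric Asymptotics

section SecondOrder

variable {E F : Type*} [NormedAddCommGroup E] [NormedSpace ℝ E] [NormedAddCommGroup F]
  [NormedSpace ℝ F] {f : E → F} {x : E}

theorem ContDiffAt.exists_lipschitzOnWith_fderiv_ball (hf : ContDiffAt ℝ 2 f x) :
    ∃ K δ, 0 < δ ∧ (∀ y ∈ ball x δ, DifferentiableAt ℝ f y) ∧
      LipschitzOnWith K (fderiv ℝ f) (ball x δ) := by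
  obtain ⟨K, t, ht, hK⟩ := (hf.fderiv_right (m := 1) le_rfl).exists_lipschitzOnWith
  have hdiff : ∀ᶠ y in 𝓝 x, DifferentiableAt ℝ f y :=
    (hf.eventually (by simp)).mono fun y hy => hy.differentiableAt (by norm_num)
  obtain ⟨δ, hδ, hsub⟩ := Metric.mem_nhds_iff.mp (inter_mem ht hdiff)
  exact ⟨K, δ, hδ, fun y hy => (hsub hy).2, hK.mono fun y hy => (hsub hy).1⟩

theorem ContDiffAt.isBigO_sub_sub_fderiv (hf : ContDiffAt ℝ 2 f x) :
    (fun h => f (x + h) - f x - fderiv ℝ f x h) =O[𝓝 0] fun h => ‖h‖ ^ 2 := by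
  obtain ⟨K, δ, hδ, hdiff, hK⟩ := hf.exists_lipschitzOnWith_fderiv_ball
  refine IsBigO.of_bound K ?_
  filter_upwards [ball_mem_nhds (0 : E) hδ] with h hh
  rw [mem_ball_zero_iff] at hh
  have hsub : closedBall x ‖h‖ ⊆ ball x δ := closedBall_subset_ball hh
  have hbound : ∀ y ∈ closedBall x ‖h‖, ‖fderiv ℝ f y - fderiv ℝ f x‖ ≤ K * ‖h‖ := by
    intro y hy
    have := hK.dist_le_mul y (hsub hy) x (mem_ball_self hδ)
    rw [dist_eq_norm, dist_eq_norm] at this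
    exact this.trans (by gcongr; exact mem_closedBall_iff_norm.mp hy)
  have key := (convex_closedBall x ‖h‖).norm_image_sub_le_of_norm_hasFDerivWithin_le
    (f := fun y => f y - fderiv ℝ f x y) (x := x) (y := x + h)
    (fun y hy => ((hdiff y (hsub hy)).hasFDerivAt.sub
      (fderiv ℝ f x).hasFDerivAt).hasFDerivWithinAt)
    hbound (mem_closedBall_self (norm_nonneg h)) (by simp [mem_closedBall, dist_eq_norm])
  simp only [map_add, add_sub_cancel_left] at key
  rw [norm_pow, norm_norm]
  calc ‖f (x + h) - f x - fderiv ℝ f x h‖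
      = ‖f (x + h) - (fderiv ℝ f x x + fderiv ℝ f x h) - (f x - fderiv ℝ f x x)‖ := by
        congr 1; abel
    _ ≤ K * ‖h‖ * ‖h‖ := key
    _ = K * ‖h‖ ^ 2 := by ring

theorem ContDiffAt.isBigO_mixed_difference (hf : ContDiffAt ℝ 2 f x) :
    (fun p : E × E => f (x + p.1 + p.2) - f (x + p.1) - f (x + p.2) + f x) =O[𝓝 0]
      fun p => ‖p.1‖ * ‖p.2‖ := by
  obtain ⟨K, δ, hδ, hdiff, hK⟩ := hf.exists_lipschitzOnWith_fderiv_ball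
  refine IsBigO.of_bound K ?_
  filter_upwards [ball_mem_nhds (0 : E × E) (half_pos hδ)] with ⟨a, b⟩ hab
  rw [mem_ball_zero_iff, Prod.norm_mk, max_lt_iff] at hab
  have hsub : ∀ y ∈ closedBall x ‖a‖, y ∈ ball x δ ∧ y + b ∈ ball x δ := by
    intro y hy
    rw [mem_closedBall, dist_eq_norm] at hy
    refine ⟨?_, ?_⟩ <;> rw [mem_ball, dist_eq_norm]
    · linarith
    · calc ‖y + b - x‖ ≤ ‖y - x‖ + ‖b‖ := by rw [add_sub_right_comm]; exact norm_add_le _ _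
        _ < δ := by linarith
  have hbound : ∀ y ∈ closedBall x ‖a‖, ‖fderiv ℝ f (y + b) - fderiv ℝ f y‖ ≤ K * ‖b‖ := by
    intro y hy
    have := hK.dist_le_mul _ (hsub y hy).2 y (hsub y hy).1
    rwa [dist_eq_norm, dist_eq_norm, add_sub_cancel_left] at this
  have key := (convex_closedBall x ‖a‖).norm_image_sub_le_of_norm_hasFDerivWithin_le
    (f := fun y => f (y + b) - f y) (x := x) (y := x + a)
    (fun y hy => (((hdiff _ (hsub y hy).2).hasFDerivAt.comp y
      ((hasFDerivAt_id y).add_const b)).sub (hdiff y (hsub y hy).1).hasFDerivAt).hasFDerivWithinAt)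
    (by simpa using hbound) (mem_closedBall_self (norm_nonneg a))
    (by simp [mem_closedBall, dist_eq_norm])
  rw [add_sub_cancel_left] at key
  rw [Real.norm_eq_abs, abs_mul, abs_norm, abs_norm]
  calc ‖f (x + a + b) - f (x + a) - f (x + b) + f x‖
      = ‖f (x + a + b) - f (x + a) - (f (x + b) - f x)‖ := by congr 1; abel
    _ ≤ K * ‖b‖ * ‖a‖ := key
    _ = K * (‖a‖ * ‖b‖) := by ring

end SecondOrder

theorem OtildeI_of_isBigO {I : Set ℝ} {r : ℕ → ℝ → ℝ} {h : ℕ → ℝ}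
    (H : (fun x : ℕ × ℝ => r x.1 x.2) =O[atTop ×ˢ 𝓟 I] fun x => h x.1) : OtildeI I r h := by
  obtain ⟨C, hC, hbound⟩ := H.exists_pos
  obtain ⟨N, hN⟩ := eventually_atTop.1 (eventually_prod_principal_iff.1 hbound.bound)
  exact ⟨C, hC, N, fun n hn t ht => hN n hn.le t ht⟩

theorem hasDerivAt_one_add_mul_rpow (α k : ℝ) :
    HasDerivAt (fun u : ℝ => (1 + k * u) ^ α) (k * α) 0 := by
  simpa using (((hasDerivAt_id (0 : ℝ)).const_mul k).const_add 1).rpow_const (p := α) (by simp)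

theorem rpow_neg_mul_natCast {x : ℝ} (hx : 0 < x) (α : ℝ) (k : ℕ) :
    x ^ (-(k * α)) = ((x ^ α) ^ k)⁻¹ := by
  rw [Real.rpow_neg hx.le, mul_comm, Real.rpow_mul_natCast hx.le]

theorem jacobiWeight_two_mul (α c₁ c₂ : ℝ) (j : ℕ) :
    jacobiWeight α c₁ c₂ (2 * j) = jacobiDiag α (2 * j) * c₂ := by
  simp [jacobiWeight, jacobiDiag]

theorem jacobiWeight_two_mul_add_one (α c₁ c₂ : ℝ) (j : ℕ) :
    jacobiWeight α c₁ c₂ (2 * j + 1) = jacobiDiag α (2 * j + 1) * c₁ := by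
  simp [jacobiWeight, jacobiDiag]

theorem jacobiDiag_eq_mul_rpow (α : ℝ) {s : ℝ} (hs : 0 < s) {k : ℕ} {j : ℝ}
    (hk : (k : ℝ) = s + j) : jacobiDiag α k = s ^ α * (1 + j * s⁻¹) ^ α := by
  have hj : 1 + j * s⁻¹ = k / s := by rw [hk]; field_simp
  rw [jacobiDiag, hj, ← Real.mul_rpow hs.le (div_nonneg (Nat.cast_nonneg k) hs.le)]
  field_simp

noncomputable section

/-- With `q_{2n+j} = T a_j`, `b_{2n+j} = T a_j c_{2n+j}` and `λ = T w`, one has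
`F_n(λ) = scaledFNum c₁ c₂ w a₁ a₂ / ((1 - w) a₁ a₂ c₁ c₂)` and
`F_{n-1}(λ) = scaledFNumPrev c₁ c₂ w a₋₁ a₋₂ / ((a₋₂ - w) a₋₁ c₁ c₂)`. -/
def scaledFNum (c₁ c₂ w a₁ a₂ : ℝ) : ℝ :=
  (a₂ - w) * c₂ ^ 2 - (1 - w) * (a₁ - w) * (a₂ - w) + c₁ ^ 2 * a₁ ^ 2 * (1 - w)

def scaledFNumPrev (c₁ c₂ w a₁ a₂ : ℝ) : ℝ :=
  (1 - w) * a₂ ^ 2 * c₂ ^ 2 - (a₂ - w) * (a₁ - w) * (1 - w) + c₁ ^ 2 * a₁ ^ 2 * (a₂ - w)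

/-- `(c₁c₂)³` times the claimed expansion, written in `u = 1/(2n)` and `w = λ/(2n)^α`. -/
def expansionPoly (α c₁ c₂ u w : ℝ) : ℝ :=
  -2 * (c₁ * c₂) ^ 2 * w + c₁ * c₂ * (3 + c₁ * c₂) * w ^ 2 + α * (c₁ * c₂) ^ 2 * u -
    (3 * (c₁ * c₂) + 4) * w ^ 3

def scaledPoint (α : ℝ) (n : ℕ) (t : ℝ) : ℝ × ℝ := ((2 * n : ℝ)⁻¹, t / (2 * n : ℝ) ^ α)

def betaModel (α c₁ c₂ : ℝ) (p : ℝ × ℝ) : ℝ :=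
  4 * (c₁ * c₂) ^ 2 *
      (((1 + 2 * p.1) ^ α - p.2) * ((1 - 2 * p.1) ^ α - p.2) * ((1 - p.1) ^ α) ^ 2) /
    (scaledFNum c₁ c₂ p.2 ((1 + p.1) ^ α) ((1 + 2 * p.1) ^ α) *
      scaledFNumPrev c₁ c₂ p.2 ((1 - p.1) ^ α) ((1 - 2 * p.1) ^ α)) - 1

def BetaModelRegular (α c₁ c₂ : ℝ) (p : ℝ × ℝ) : Prop :=
  p.2 ≠ 1 ∧ p.2 ≠ (1 - 2 * p.1) ^ α ∧
    scaledFNum c₁ c₂ p.2 ((1 + p.1) ^ α) ((1 + 2 * p.1) ^ α) ≠ 0 ∧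
    scaledFNumPrev c₁ c₂ p.2 ((1 - p.1) ^ α) ((1 - 2 * p.1) ^ α) ≠ 0

/-- The numerator of `betaModel - expansionPoly / (c₁c₂)³` over the common denominator
`(c₁c₂)³ · scaledFNum · scaledFNumPrev`. -/
def betaRemainderNum (α c₁ c₂ : ℝ) (p : ℝ × ℝ) : ℝ :=
  4 * (c₁ * c₂) ^ 5 *
      (((1 + 2 * p.1) ^ α - p.2) * ((1 - 2 * p.1) ^ α - p.2) * ((1 - p.1) ^ α) ^ 2) -
    ((c₁ * c₂) ^ 3 + expansionPoly α c₁ c₂ p.1 p.2) *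
      scaledFNum c₁ c₂ p.2 ((1 + p.1) ^ α) ((1 + 2 * p.1) ^ α) *
      scaledFNumPrev c₁ c₂ p.2 ((1 - p.1) ^ α) ((1 - 2 * p.1) ^ α)

def errorScale (p : ℝ × ℝ) : ℝ := p.1 ^ 2 + |p.1| * |p.2| + p.2 ^ 4

theorem errorScale_nonneg (p : ℝ × ℝ) : 0 ≤ errorScale p := by
  unfold errorScale; positivity

variable {α c₁ c₂ : ℝ}

theorem scaledFNum_one_one (hrel : c₁ ^ 2 + c₂ ^ 2 = 1 + 2 * (c₁ * c₂)) (w : ℝ) :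
    scaledFNum c₁ c₂ w 1 1 = (1 - w) * (2 * (c₁ * c₂) + 2 * w - w ^ 2) := by
  unfold scaledFNum; linear_combination (1 - w) * hrel

theorem scaledFNumPrev_one_one (hrel : c₁ ^ 2 + c₂ ^ 2 = 1 + 2 * (c₁ * c₂)) (w : ℝ) :
    scaledFNumPrev c₁ c₂ w 1 1 = (1 - w) * (2 * (c₁ * c₂) + 2 * w - w ^ 2) := by
  unfold scaledFNumPrev; linear_combination (1 - w) * hrel

theorem betaRemainderNum_zero_mk (hrel : c₁ ^ 2 + c₂ ^ 2 = 1 + 2 * (c₁ * c₂)) (w : ℝ) :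
    betaRemainderNum α c₁ c₂ (0, w) = w ^ 4 * ((1 - w) ^ 2 *
      (20 * (c₁ * c₂) + 24 * (c₁ * c₂) ^ 2 + 3 * (c₁ * c₂) ^ 3 +
        (16 + 8 * (c₁ * c₂) - 6 * (c₁ * c₂) ^ 2) * w -
        (16 + 15 * (c₁ * c₂) + (c₁ * c₂) ^ 2) * w ^ 2 + (4 + 3 * (c₁ * c₂)) * w ^ 3)) := by
  simp only [betaRemainderNum, mul_zero, add_zero, sub_zero, Real.one_rpow,
    scaledFNum_one_one hrel, scaledFNumPrev_one_one hrel, expansionPoly]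
  ring

theorem hasDerivAt_betaRemainderNum_mk_zero (hrel : c₁ ^ 2 + c₂ ^ 2 = 1 + 2 * (c₁ * c₂)) :
    HasDerivAt (fun u => betaRemainderNum α c₁ c₂ (u, 0)) 0 0 := by
  have h₁ : HasDerivAt (fun u : ℝ => (1 + u) ^ α) α 0 := by
    simpa using hasDerivAt_one_add_mul_rpow α 1
  have h₂ := hasDerivAt_one_add_mul_rpow α 2
  have h₃ : HasDerivAt (fun u : ℝ => (1 - u) ^ α) (-α) 0 := by
    simpa [← sub_eq_add_neg] using hasDerivAt_one_add_mul_rpow α (-1)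
  have h₄ : HasDerivAt (fun u : ℝ => (1 - 2 * u) ^ α) (-2 * α) 0 := by
    simpa [← sub_eq_add_neg] using hasDerivAt_one_add_mul_rpow α (-2)
  have hK := ((h₂.mul h₄).mul (h₃.pow 2)).const_mul (4 * (c₁ * c₂) ^ 5)
  have hX := ((h₂.mul_const (c₂ ^ 2)).sub (h₁.mul h₂)).add ((h₁.pow 2).const_mul (c₁ ^ 2))
  have hX' := (((h₄.pow 2).mul_const (c₂ ^ 2)).sub (h₄.mul h₃)).add
    (((h₃.pow 2).const_mul (c₁ ^ 2)).mul h₄)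
  have hP := ((hasDerivAt_id (0 : ℝ)).const_mul (α * (c₁ * c₂) ^ 2)).const_add ((c₁ * c₂) ^ 3)
  refine ((hK.sub ((hP.mul hX).mul hX')).congr_of_eventuallyEq
    (Eventually.of_forall fun u => ?_)).congr_deriv ?_
  · simp only [betaRemainderNum, scaledFNum, scaledFNumPrev, expansionPoly, Pi.mul_apply,
      Pi.sub_apply, Pi.add_apply, Pi.pow_apply, id]
    ring
  · simp only [Pi.mul_apply, Pi.sub_apply, Pi.add_apply, Pi.pow_apply, id, mul_zero, sub_zero,
      add_zero, Real.one_rpow]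
    -- the derivative is a quadratic in `c₁² + c₂² - 1` with root `2c₁c₂`
    linear_combination α * (c₁ * c₂) ^ 2 *
      ((2 * (c₁ * c₂) - 1) * (c₁ ^ 2 + c₂ ^ 2 - 1 + 2 * (c₁ * c₂)) + 2 * (c₁ * c₂)) * hrel

theorem betaRemainderNum_isBigO (hrel : c₁ ^ 2 + c₂ ^ 2 = 1 + 2 * (c₁ * c₂)) :
    betaRemainderNum α c₁ c₂ =O[𝓝 0] errorScale := by
  have hzero : betaRemainderNum α c₁ c₂ (0, 0) = 0 := by
    simpa using betaRemainderNum_zero_mk (α := α) hrel 0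
  have hsmooth : ContDiffAt ℝ 2 (betaRemainderNum α c₁ c₂) 0 := by
    unfold betaRemainderNum scaledFNum scaledFNumPrev expansionPoly
    fun_prop (disch := norm_num)
  have hmixed : (fun p => betaRemainderNum α c₁ c₂ p - betaRemainderNum α c₁ c₂ (p.1, 0) -
      betaRemainderNum α c₁ c₂ (0, p.2)) =O[𝓝 0] fun p => |p.1| * |p.2| := by
    refine (hsmooth.isBigO_mixed_difference.comp_tendsto
      (k := fun p : ℝ × ℝ => (((0 : ℝ), p.2), (p.1, (0 : ℝ)))) (l' := 𝓝 0)
      (Continuous.tendsto' (by fun_prop) _ _ (by simp))).congr (fun p => ?_) (fun p => ?_)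
    · simp [← Prod.mk_zero_zero, hzero]
      ring
    · simp [mul_comm]
  have hu : (fun u => betaRemainderNum α c₁ c₂ (u, 0)) =O[𝓝 0] fun u => u ^ 2 := by
    have hφ := hasDerivAt_betaRemainderNum_mk_zero (α := α) hrel
    have := (hsmooth.comp (0 : ℝ) (f := fun u : ℝ => (u, (0 : ℝ)))
      (by fun_prop)).isBigO_sub_sub_fderiv
    simpa [Function.comp_def, hφ.hasFDerivAt.fderiv, hzero] using this
  have hw : (fun w => betaRemainderNum α c₁ c₂ (0, w)) =O[𝓝 0] fun w => w ^ 4 := by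
    simp only [betaRemainderNum_zero_mk hrel]
    simpa using (isBigO_refl (fun w : ℝ => w ^ 4) (𝓝 0)).mul
      ((Continuous.tendsto (by fun_prop) 0).isBigO_one ℝ)
  refine IsBigO.congr_left (((hmixed.trans (isBigO_of_le _ fun p => ?_)).add
      ((hu.comp_tendsto (continuous_fst.tendsto' 0 0 rfl)).trans (isBigO_of_le _ fun p => ?_))).add
      ((hw.comp_tendsto (continuous_snd.tendsto' 0 0 rfl)).trans (isBigO_of_le _ fun p => ?_)))
      fun p => by simp only [Function.comp_apply]; ring
  all_goals
    rw [Real.norm_of_nonneg (errorScale_nonneg p)]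
    simp only [Function.comp_apply, Real.norm_eq_abs, abs_mul, abs_abs,
      abs_of_nonneg (sq_nonneg p.1), abs_of_nonneg (by positivity : 0 ≤ p.2 ^ 4), errorScale]
    nlinarith [abs_nonneg p.1, abs_nonneg p.2, sq_nonneg p.1, pow_two_nonneg (p.2 ^ 2)]

theorem eventually_betaModelRegular (hc : c₁ * c₂ ≠ 0)
    (hrel : c₁ ^ 2 + c₂ ^ 2 = 1 + 2 * (c₁ * c₂)) :
    ∀ᶠ p in 𝓝 (0 : ℝ × ℝ), BetaModelRegular α c₁ c₂ p := by
  have h₁ : ∀ᶠ p in 𝓝 (0 : ℝ × ℝ), p.2 ≠ 1 :=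
    continuous_snd.continuousAt.eventually_ne (by simp)
  have h₂ : ∀ᶠ p in 𝓝 (0 : ℝ × ℝ), p.2 - (1 - 2 * p.1) ^ α ≠ 0 :=
    ContinuousAt.eventually_ne (by fun_prop (disch := norm_num)) (by simp)
  have h₃ : ∀ᶠ p in 𝓝 (0 : ℝ × ℝ),
      scaledFNum c₁ c₂ p.2 ((1 + p.1) ^ α) ((1 + 2 * p.1) ^ α) ≠ 0 :=
    ContinuousAt.eventually_ne (by unfold scaledFNum; fun_prop (disch := norm_num))
      (by simpa [scaledFNum_one_one hrel] using hc)
  have h₄ : ∀ᶠ p in 𝓝 (0 : ℝ × ℝ),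
      scaledFNumPrev c₁ c₂ p.2 ((1 - p.1) ^ α) ((1 - 2 * p.1) ^ α) ≠ 0 :=
    ContinuousAt.eventually_ne (by unfold scaledFNumPrev; fun_prop (disch := norm_num))
      (by simpa [scaledFNumPrev_one_one hrel] using hc)
  filter_upwards [h₁, h₂, h₃, h₄] with p hp₁ hp₂ hp₃ hp₄
  exact ⟨hp₁, sub_ne_zero.mp hp₂, hp₃, hp₄⟩

theorem betaModel_sub_isBigO (hc : c₁ * c₂ ≠ 0) (hrel : c₁ ^ 2 + c₂ ^ 2 = 1 + 2 * (c₁ * c₂)) :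
    (fun p => betaModel α c₁ c₂ p - expansionPoly α c₁ c₂ p.1 p.2 / (c₁ * c₂) ^ 3) =O[𝓝 0]
      errorScale := by
  set D : ℝ × ℝ → ℝ := fun p => (c₁ * c₂) ^ 3 *
    scaledFNum c₁ c₂ p.2 ((1 + p.1) ^ α) ((1 + 2 * p.1) ^ α) *
    scaledFNumPrev c₁ c₂ p.2 ((1 - p.1) ^ α) ((1 - 2 * p.1) ^ α) with hD
  have hD0 : D 0 = 4 * (c₁ * c₂) ^ 5 := by
    simp [hD, scaledFNum_one_one hrel, scaledFNumPrev_one_one hrel]; ring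
  have hDinv : (fun p => (D p)⁻¹) =O[𝓝 0] fun _ => (1 : ℝ) := by
    refine Tendsto.isBigO_one ℝ (c := (D 0)⁻¹) (Tendsto.inv₀ (ContinuousAt.tendsto ?_) ?_)
    · rw [hD]; unfold scaledFNum scaledFNumPrev; fun_prop (disch := norm_num)
    · rw [hD0]; exact mul_ne_zero four_ne_zero (pow_ne_zero 5 hc)
  refine ((betaRemainderNum_isBigO (α := α) hrel).mul hDinv).congr' ?_ (by simp)
  filter_upwards [eventually_betaModelRegular (α := α) hc hrel] with p hp
  obtain ⟨-, -, hX, hX'⟩ := hp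
  simp only [hD, betaModel, betaRemainderNum]
  field_simp [left_ne_zero_of_mul hc, right_ne_zero_of_mul hc]
  ring

theorem jacobiBeta_eq_betaModel {n : ℕ} (hn : 1 < n) (t : ℝ)
    (hreg : BetaModelRegular α c₁ c₂ (scaledPoint α n t)) :
    jacobiBeta (jacobiWeight α c₁ c₂) (jacobiDiag α) n t =
      betaModel α c₁ c₂ (scaledPoint α n t) := by
  obtain ⟨m, rfl⟩ : ∃ m, n = m + 1 := ⟨n - 1, by omega⟩
  obtain ⟨hw₁, hw₂, hX, hX'⟩ := hreg
  simp only [scaledPoint, betaModel] at *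
  set s : ℝ := 2 * ((m + 1 : ℕ) : ℝ) with hs_def
  have hs : 0 < s := by positivity
  have hsu : 2 * s⁻¹ < 1 := by
    rw [← div_eq_mul_inv, div_lt_one hs, hs_def]; push_cast
    linarith [(by exact_mod_cast hn : (1 : ℝ) < m + 1)]
  have hT : 0 < s ^ α := Real.rpow_pos_of_pos hs α
  have ha₁ := Real.rpow_pos_of_pos (by positivity : 0 < 1 + s⁻¹) α
  have ha₂ := Real.rpow_pos_of_pos (by positivity : 0 < 1 + 2 * s⁻¹) α
  have ha₃ := Real.rpow_pos_of_pos (by linarith : 0 < 1 - s⁻¹) α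
  have ha₄ := Real.rpow_pos_of_pos (by linarith : 0 < 1 - 2 * s⁻¹) α
  have h₁ : 1 - t / s ^ α ≠ 0 := sub_ne_zero.mpr (Ne.symm hw₁)
  have h₂ : (1 - 2 * s⁻¹) ^ α - t / s ^ α ≠ 0 := sub_ne_zero.mpr (Ne.symm hw₂)
  simp only [jacobiBeta, jacobiF, jacobiG, Nat.add_sub_cancel,
    show 2 * (m + 1) - 1 = 2 * m + 1 by omega, show 2 * (m + 1) + 2 = 2 * (m + 2) by ring,
    show 2 * m + 2 = 2 * (m + 1) by ring, jacobiWeight_two_mul, jacobiWeight_two_mul_add_one]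
  rw [jacobiDiag_eq_mul_rpow α hs (k := 2 * (m + 1)) (j := 0) (by simp [hs_def]),
    jacobiDiag_eq_mul_rpow α hs (k := 2 * (m + 1) + 1) (j := 1) (by simp [hs_def]),
    jacobiDiag_eq_mul_rpow α hs (k := 2 * (m + 2)) (j := 2) (by simp [hs_def]; ring),
    jacobiDiag_eq_mul_rpow α hs (k := 2 * m + 1) (j := -1) (by simp [hs_def]; ring),
    jacobiDiag_eq_mul_rpow α hs (k := 2 * m) (j := -2) (by simp [hs_def]; ring)]
  simp only [zero_mul, add_zero, Real.one_rpow, mul_one, one_mul, neg_mul, ← sub_eq_add_neg]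
  rw [show t = s ^ α * (t / s ^ α) by field_simp]
  unfold scaledFNum scaledFNumPrev at *
  generalize t / s ^ α = w at *
  generalize s ^ α = T at *
  generalize (1 + s⁻¹) ^ α = a₁ at *
  generalize (1 + 2 * s⁻¹) ^ α = a₂ at *
  generalize (1 - s⁻¹) ^ α = a₃ at *
  generalize (1 - 2 * s⁻¹) ^ α = a₄ at *
  field_simp

theorem expansion_eq_expansionPoly (t : ℝ) {x : ℝ} (hx : 0 < x) (hc : c₁ * c₂ ≠ 0) :
    -(2 ^ (1 - α) / (c₁ * c₂)) * t * x ^ (-α) +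
        2 ^ (-(2 * α)) / (c₁ * c₂) * (3 / (c₁ * c₂) + 1) * t ^ 2 * x ^ (-(2 * α)) +
        α / (2 * c₁ * c₂) * x⁻¹ -
        2 ^ (-(3 * α)) / (c₁ * c₂) ^ 2 * (3 + 4 / (c₁ * c₂)) * t ^ 3 * x ^ (-(3 * α)) =
      expansionPoly α c₁ c₂ (2 * x)⁻¹ (t / (2 * x) ^ α) / (c₁ * c₂) ^ 3 := by
  have h2 : (0 : ℝ) < 2 := two_pos
  have hx' := (Real.rpow_pos_of_pos hx α).ne'
  have h2' := (Real.rpow_pos_of_pos h2 α).ne'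
  have hc₁ : c₁ ≠ 0 := left_ne_zero_of_mul hc
  have hc₂ : c₂ ≠ 0 := right_ne_zero_of_mul hc
  have hpow : ∀ {y : ℝ}, 0 < y → y ^ (-(2 * α)) = ((y ^ α) ^ 2)⁻¹ ∧
      y ^ (-(3 * α)) = ((y ^ α) ^ 3)⁻¹ := fun hy =>
    ⟨mod_cast rpow_neg_mul_natCast hy α 2, mod_cast rpow_neg_mul_natCast hy α 3⟩
  rw [Real.rpow_sub h2, Real.rpow_one, Real.rpow_neg hx.le, Real.mul_rpow h2.le hx.le,
    (hpow h2).1, (hpow h2).2, (hpow hx).1, (hpow hx).2]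
  unfold expansionPoly
  field_simp

theorem tendsto_scaledPoint (hα : 0 < α) {I : Set ℝ} (hI : Bornology.IsBounded I) :
    Tendsto (fun x : ℕ × ℝ => scaledPoint α x.1 x.2) (atTop ×ˢ 𝓟 I) (𝓝 0) := by
  obtain ⟨M, hM⟩ := hI.exists_norm_le
  have hs : Tendsto (fun x : ℕ × ℝ => (2 * x.1 : ℝ)) (atTop ×ˢ 𝓟 I) atTop :=
    (tendsto_natCast_atTop_atTop.const_mul_atTop two_pos).comp tendsto_fst
  rw [← Prod.mk_zero_zero]
  refine (tendsto_inv_atTop_zero.comp hs).prodMk_nhds (squeeze_zero_norm' ?_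
    (by simpa using ((tendsto_rpow_atTop hα).comp hs).inv_tendsto_atTop.const_mul M))
  filter_upwards [(eventually_gt_atTop 0).prod_inl _,
    (eventually_principal.2 fun _ => id).prod_inr _] with x hx ht
  have hT : 0 < (2 * x.1 : ℝ) ^ α := by positivity
  rw [norm_div, Real.norm_of_nonneg hT.le, div_eq_mul_inv]
  exact mul_le_mul_of_nonneg_right (hM _ ht) (inv_nonneg.2 hT.le)

theorem errorScale_le_rpow (hα₁ : 1 / 3 ≤ α) (hα₂ : α ≤ 1) {x M w : ℝ} (hx₀ : 0 < x)
    (hx₁ : x ≤ 1) (hw : |w| ≤ M * x ^ α) :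
    errorScale (x, w) ≤ (1 + M + M ^ 4) * x ^ (1 + α) := by
  have hxα : 0 < x ^ α := Real.rpow_pos_of_pos hx₀ α
  have hM : 0 ≤ M := nonneg_of_mul_nonneg_left ((abs_nonneg w).trans hw) hxα
  have h₁ : x ^ 2 ≤ x ^ (1 + α) := by
    rw [← Real.rpow_two]; exact Real.rpow_le_rpow_of_exponent_ge hx₀ hx₁ (by linarith)
  have h₂ : |x| * |w| ≤ M * x ^ (1 + α) := by
    rw [abs_of_pos hx₀, Real.rpow_add hx₀, Real.rpow_one]
    nlinarith
  have h₃ : w ^ 4 ≤ M ^ 4 * x ^ (1 + α) := by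
    have hx4 : x ^ (4 * α) ≤ x ^ (1 + α) :=
      Real.rpow_le_rpow_of_exponent_ge hx₀ hx₁ (by linarith)
    calc w ^ 4 = |w| ^ 4 := (pow_abs w 4).symm ▸ (abs_of_nonneg (by positivity)).symm
      _ ≤ (M * x ^ α) ^ 4 := pow_le_pow_left₀ (abs_nonneg w) hw 4
      _ = M ^ 4 * x ^ (4 * α) := by
          rw [mul_pow, mul_comm 4 α, ← Real.rpow_mul_natCast hx₀.le]; norm_num
      _ ≤ M ^ 4 * x ^ (1 + α) := by gcongr
  unfold errorScale
  linarith

theorem errorScale_scaledPoint_isBigO (hα₁ : 1 / 3 ≤ α) (hα₂ : α ≤ 1) {I : Set ℝ}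
    (hI : Bornology.IsBounded I) :
    (fun x : ℕ × ℝ => errorScale (scaledPoint α x.1 x.2)) =O[atTop ×ˢ 𝓟 I]
      fun x => (x.1 : ℝ) ^ (-1 - α) := by
  obtain ⟨M, hM⟩ := hI.exists_norm_le
  refine IsBigO.of_bound (1 + M + M ^ 4) ?_
  filter_upwards [(eventually_gt_atTop 0).prod_inl _,
    (eventually_principal.2 fun _ => id).prod_inr _] with x hx ht
  have hM₀ : 0 ≤ M := (norm_nonneg _).trans (hM _ ht)
  have hn : (1 : ℝ) ≤ x.1 := by exact_mod_cast hx
  have hs : (0 : ℝ) < 2 * x.1 := by positivity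
  have hw : |x.2 / (2 * x.1 : ℝ) ^ α| ≤ M * ((2 * x.1 : ℝ)⁻¹) ^ α := by
    rw [abs_div, abs_of_pos (Real.rpow_pos_of_pos hs α), Real.inv_rpow hs.le, ← div_eq_mul_inv]
    exact div_le_div_of_nonneg_right (hM _ ht) (Real.rpow_pos_of_pos hs α).le
  have hpow : ((2 * x.1 : ℝ)⁻¹) ^ (1 + α) ≤ (x.1 : ℝ) ^ (-1 - α) := by
    rw [Real.inv_rpow hs.le, show -1 - α = -(1 + α) by ring, Real.rpow_neg (by positivity)]
    exact inv_anti₀ (by positivity) (Real.rpow_le_rpow (by positivity) (by linarith) (by linarith))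
  rw [Real.norm_of_nonneg (errorScale_nonneg _), Real.norm_of_nonneg (by positivity)]
  exact (errorScale_le_rpow hα₁ hα₂ (inv_pos.2 hs) (inv_le_one_of_one_le₀ (by linarith)) hw).trans
    (mul_le_mul_of_nonneg_left hpow (by positivity))

end

theorem jacobiBeta_uniform_expansion_general (α c₁ c₂ : ℝ)
    (hα : α ∈ Set.Ioo (1/3 : ℝ) (1/2)) (hc₁ : 0 < c₁) (hc₂ : 0 < c₂)
    (hcrit : |c₁ - c₂| = 1)
    (I : Set ℝ) (hIbdd : Bornology.IsBounded I) :
    OtildeI I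
      (fun n t =>
        jacobiBeta (jacobiWeight α c₁ c₂) (jacobiDiag α) n t -
          (-(2 ^ (1 - α) / (c₁ * c₂)) * t * (n : ℝ) ^ (-α) +
            2 ^ (-(2 * α)) / (c₁ * c₂) * (3 / (c₁ * c₂) + 1) * t ^ 2 * (n : ℝ) ^ (-(2 * α)) +
            α / (2 * c₁ * c₂) * (n : ℝ)⁻¹ -
            2 ^ (-(3 * α)) / (c₁ * c₂) ^ 2 * (3 + 4 / (c₁ * c₂)) * t ^ 3 * (n : ℝ) ^ (-(3 * α))))
      (fun n => (n : ℝ) ^ (-1 - α)) := by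
  obtain ⟨hα₁, hα₂⟩ := hα
  have hc : c₁ * c₂ ≠ 0 := (mul_pos hc₁ hc₂).ne'
  have hsq : (c₁ - c₂) ^ 2 = 1 := by rw [← sq_abs, hcrit, one_pow]
  have hrel : c₁ ^ 2 + c₂ ^ 2 = 1 + 2 * (c₁ * c₂) := by linear_combination hsq
  have hp := tendsto_scaledPoint (α := α) (by linarith) hIbdd
  refine OtildeI_of_isBigO ((((betaModel_sub_isBigO (α := α) hc hrel).comp_tendsto hp).trans
    (errorScale_scaledPoint_isBigO hα₁.le (by linarith) hIbdd)).congr' ?_ EventuallyEq.rfl)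
  filter_upwards [hp.eventually (eventually_betaModelRegular (α := α) hc hrel),
    (eventually_gt_atTop 1).prod_inl _] with x hreg hn
  rw [Function.comp_apply, jacobiBeta_eq_betaModel hn x.2 hreg,
    expansion_eq_expansionPoly x.2 (by positivity) hc]
  rfl

/-- Uniform asymptotic expansion of `β_n(λ)` in the critical case `|c₁ − c₂| = 1`. -/
theorem jacobiBeta_uniform_expansion (α c₁ c₂ : ℝ)
    (hα : α ∈ Set.Ioo (1/3 : ℝ) (1/2)) (hc₁ : 0 < c₁) (hc₂ : 0 < c₂)
    (hcrit : |c₁ - c₂| = 1)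
    (I : Set ℝ) (hI : I ⊆ Set.Ioi 0) (hIbdd : Bornology.IsBounded I) :
    OtildeI I
      (fun n t =>
        jacobiBeta (jacobiWeight α c₁ c₂) (jacobiDiag α) n t -
          (-(2 ^ (1 - α) / (c₁ * c₂)) * t * (n : ℝ) ^ (-α) +
            2 ^ (-(2 * α)) / (c₁ * c₂) * (3 / (c₁ * c₂) + 1) * t ^ 2 * (n : ℝ) ^ (-(2 * α)) +
            α / (2 * c₁ * c₂) * (n : ℝ)⁻¹ -
            2 ^ (-(3 * α)) / (c₁ * c₂) ^ 2 * (3 + 4 / (c₁ * c₂)) * t ^ 3 * (n : ℝ) ^ (-(3 * α))))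
      (fun n => (n : ℝ) ^ (-1 - α)) :=
  jacobiBeta_uniform_expansion_general α c₁ c₂ hα hc₁ hc₂ hcrit I hIbdd
end
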